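/- The family of functions {x ↦ e^{2πiλx} χ_Ω(x)}_{λ∈Λ} is a complete orthonormal system (orthonormal basis) of the Hilbert space L²(Ω); that is, (Ω, Λ) is a spectral pair. -/

import Mathlib

open MeasureTheory Complex Real Classical

noncomputable section

/-- The non-uniform translation set `Λ = {0, r/N} + 2ℤ`. -/
def LambdaSet (N r : ℕ) : Set ℝ :=
  {x | ∃ z : ℤ, x = 2 * (z : ℝ) ∨ x = (r : ℝ) / (N : ℝ) + 2 * (z : ℝ)}

/-- The spectral set `Ω = [0, 1/2) ∪ [N/2, (N+1)/2)`. -/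
def OmegaSet (N : ℕ) : Set ℝ :=
  Set.Ico (0 : ℝ) (1 / 2) ∪ Set.Ico ((N : ℝ) / 2) (((N : ℝ) + 1) / 2)

/-- `n × n` complex matrices. -/
abbrev Mat (n : ℕ) := Matrix (Fin n) (Fin n) ℂ

/-- Frobenius norm of a complex matrix. -/
def frobNorm {n : ℕ} (A : Mat n) : ℝ :=
  Real.sqrt (∑ m, ∑ k, ‖A m k‖ ^ 2)

/-- Membership in `ℓ²(Λ, M_n)`. -/
def MemL2 {n : ℕ} (N r : ℕ) (f : LambdaSet N r → Mat n) : Prop :=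
  Summable fun lam : LambdaSet N r => ∑ m, ∑ k, ‖f lam m k‖ ^ 2

/-- Inner product on `ℓ²(Λ, M_n)`: `⟨f, g⟩ = ∑_λ tr (f(λ) g(λ)*)`. -/
def l2inner {n : ℕ} (N r : ℕ) (f g : LambdaSet N r → Mat n) : ℂ :=
  ∑' lam : LambdaSet N r, ∑ m, ∑ k, f lam m k * (starRingEnd ℂ) (g lam m k)

/-- Squared norm on `ℓ²(Λ, M_n)`. -/
def l2normSq {n : ℕ} (N r : ℕ) (f : LambdaSet N r → Mat n) : ℝ :=
  ∑' lam : LambdaSet N r, ∑ m, ∑ k, ‖f lam m k‖ ^ 2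

/-- The displacement (non-uniform shift) operator `D_{2Nλ} f (λ') = f (λ' - 2Nλ)`. -/
def shift {n : ℕ} (N r : ℕ) (lam : LambdaSet N r) (f : LambdaSet N r → Mat n) :
    LambdaSet N r → Mat n :=
  fun lam' =>
    if h : ((lam' : ℝ) - 2 * (N : ℝ) * (lam : ℝ)) ∈ LambdaSet N r then f ⟨_, h⟩ else 0

/-- `F : ℝ → M_n` represents the Fourier transform of `f ∈ ℓ²(Λ, M_n)`:  each entry of `F`
is in `L²(Ω)` and the inversion formula `f(λ)_{m,k} = ∫_Ω F_{m,k}(x) e^{-2πiλx} dx` holds.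
Since `{e^{2πiλ·}}_{λ ∈ Λ}` is an orthonormal basis of `L²(Ω)`, this determines `F`
uniquely up to a.e. equality. -/
def IsFT {n : ℕ} (N r : ℕ) (f : LambdaSet N r → Mat n) (F : ℝ → Mat n) : Prop :=
  (∀ m k, MemLp (fun x => F x m k) 2 (volume.restrict (OmegaSet N))) ∧
  ∀ (lam : LambdaSet N r) (m k : Fin n),
    f lam m k =
      ∫ x in OmegaSet N, F x m k * Complex.exp (((-(2 * π * (lam : ℝ) * x) : ℝ) : ℂ) * Complex.I)

/-- The quantity `∑_{j=1}^p ∑_{λ ∈ Λ} |⟨f, D_{2Nλ} f_j⟩|²`. -/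
def besselSum {n : ℕ} (N r p : ℕ) (fs : Fin p → (LambdaSet N r → Mat n))
    (f : LambdaSet N r → Mat n) : ℝ :=
  ∑ j, ∑' lam : LambdaSet N r, ‖l2inner N r f (shift N r lam (fs j))‖ ^ 2

end

/-! Write `I = [0, 1/2)`, so that `Ω = I ∪ (I + N/2)` and `∫_Ω f = ∫_I (f + f(· + N/2))`.
Translating by `N/2` multiplies `e^{2πiλ·}` by `e^{πiλN}`, which is `1` for `λ ∈ 2ℤ`
and `-1` for `λ ∈ r/N + 2ℤ` since `r` is odd. This gives orthogonality (even differences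
are killed by `∫_I`, the others by the factor `1 + e^{πiλN}`). If `u ⊥ e^{2πiλ·}` for all
`λ ∈ Λ`, then `u + u(· + N/2)` and `e^{-2πi(r/N)·}(u - u(· + N/2))` have vanishing Fourier
coefficients on the circle `I`, hence vanish by Parseval. -/

open Set
open scoped ComplexConjugate ENNReal

section Translate

variable {G E : Type*} [AddGroup G] [MeasurableSpace G] [MeasurableAdd G] {μ : Measure G}
  [μ.IsAddRightInvariant] (c : G)

theorem measurePreserving_add_right_restrict_image (s : Set G) :
    MeasurePreserving (· + c) (μ.restrict s) (μ.restrict ((· + c) '' s)) :=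
  (measurePreserving_add_right μ c).restrict_image_emb (measurableEmbedding_addRight c) s

theorem ae_restrict_union_image_add_right_iff {s : Set G} {p : G → Prop} :
    (∀ᵐ x ∂μ.restrict (s ∪ (· + c) '' s), p x) ↔
      (∀ᵐ x ∂μ.restrict s, p x) ∧ ∀ᵐ x ∂μ.restrict s, p (x + c) := by
  rw [ae_restrict_union_iff, ← (measurePreserving_add_right_restrict_image c s).map_eq,
    (measurableEmbedding_addRight c).ae_map_iff]

theorem setIntegral_union_image_add_right [NormedAddCommGroup E] [NormedSpace ℝ E]
    {s : Set G} (hs : MeasurableSet s) (hd : Disjoint s ((· + c) '' s)) {f : G → E}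
    (hf : IntegrableOn f (s ∪ (· + c) '' s) μ) :
    ∫ x in s ∪ (· + c) '' s, f x ∂μ = ∫ x in s, (f x + f (x + c)) ∂μ := by
  have hmp := measurePreserving_add_right μ c
  have hemb := measurableEmbedding_addRight (G := G) c
  have hf₂ : IntegrableOn f ((· + c) '' s) μ := hf.mono_set subset_union_right
  rw [setIntegral_union hd (hemb.measurableSet_image.2 hs) (hf.mono_set subset_union_left) hf₂,
    hmp.setIntegral_image_emb hemb]
  exact (integral_add (hf.mono_set subset_union_left) ((hmp.integrableOn_image hemb).1 hf₂)).symm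

end Translate

noncomputable def fourierExp (ξ x : ℝ) : ℂ := Complex.exp (↑(2 * π * ξ * x) * I)

section FourierExp

variable {ξ x : ℝ}

theorem continuous_fourierExp (ξ : ℝ) : Continuous (fourierExp ξ) := by
  unfold fourierExp; fun_prop

@[simp]
theorem norm_fourierExp (ξ x : ℝ) : ‖fourierExp ξ x‖ = 1 :=
  Complex.norm_exp_ofReal_mul_I _

theorem fourierExp_ne_zero (ξ x : ℝ) : fourierExp ξ x ≠ 0 :=
  Complex.exp_ne_zero _

theorem conj_fourierExp (ξ x : ℝ) : conj (fourierExp ξ x) = fourierExp (-ξ) x := by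
  simp only [fourierExp, ← Complex.exp_conj, map_mul, Complex.conj_ofReal, Complex.conj_I]
  congr 1
  push_cast
  ring

theorem fourierExp_mul_fourierExp (ξ η x : ℝ) :
    fourierExp ξ x * fourierExp η x = fourierExp (ξ + η) x := by
  simp only [fourierExp, ← Complex.exp_add]
  congr 1
  push_cast
  ring

theorem fourierExp_add (ξ x y : ℝ) :
    fourierExp ξ (x + y) = fourierExp ξ x * fourierExp ξ y := by
  simp only [fourierExp, ← Complex.exp_add]
  congr 1
  push_cast
  ring

theorem fourierExp_zero (x : ℝ) : fourierExp 0 x = 1 := by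
  simp [fourierExp]

theorem fourierExp_eq_one_of_mul_eq_int {k : ℤ} (h : ξ * x = k) : fourierExp ξ x = 1 := by
  rw [fourierExp, ← Complex.exp_int_mul_two_pi_mul_I k]
  congr 1
  rw [show 2 * π * ξ * x = 2 * π * (ξ * x) by ring, h]
  push_cast
  ring

theorem fourierExp_eq_neg_one_of_odd {k : ℤ} (hk : Odd k) (h : 2 * ξ * x = k) :
    fourierExp ξ x = -1 := by
  obtain ⟨m, rfl⟩ := hk
  rw [fourierExp, ← Complex.exp_pi_mul_I, ← one_mul (Complex.exp (π * I)),
    ← Complex.exp_int_mul_two_pi_mul_I m, ← Complex.exp_add]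
  congr 1
  rw [show 2 * π * ξ * x = π * (2 * ξ * x) by ring, h]
  push_cast
  ring

theorem fourier_coe_eq_fourierExp (T : ℝ) (n : ℤ) (x : ℝ) :
    fourier n (x : AddCircle T) = fourierExp (n / T) x := by
  rw [fourier_coe_apply, fourierExp]
  congr 1
  push_cast
  ring

theorem setIntegral_Ico_fourierExp_eq_zero {a b : ℝ} (hab : a ≤ b) (hξ : ξ ≠ 0) {k : ℤ}
    (hk : ξ * (b - a) = k) : ∫ x in Ico a b, fourierExp ξ x = 0 := by
  have hc : (↑(2 * π * ξ) : ℂ) * I ≠ 0 := by simp [hξ, Real.pi_ne_zero]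
  have hexp : ∀ x, fourierExp ξ x = Complex.exp ((↑(2 * π * ξ) : ℂ) * I * x) := fun x => by
    rw [fourierExp]
    congr 1
    push_cast
    ring
  have hperiod : fourierExp ξ b = fourierExp ξ a := by
    rw [← add_sub_cancel a b, fourierExp_add, fourierExp_eq_one_of_mul_eq_int hk, mul_one]
  rw [integral_Ico_eq_integral_Ioo, ← integral_Ioc_eq_integral_Ioo,
    ← intervalIntegral.integral_of_le hab]
  simp_rw [hexp] at hperiod ⊢
  rw [integral_exp_mul_complex hc, hperiod, sub_self, zero_div]

variable {μ : Measure ℝ} {p : ℝ≥0∞}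

theorem memLp_fourierExp [IsFiniteMeasure μ] (ξ : ℝ) : MemLp (fourierExp ξ) p μ :=
  MemLp.of_bound (continuous_fourierExp ξ).aestronglyMeasurable 1
    (ae_of_all _ fun x => (norm_fourierExp ξ x).le)

theorem MeasureTheory.MemLp.fourierExp_mul {f : ℝ → ℂ} (hf : MemLp f p μ) (ξ : ℝ) :
    MemLp (fun x => fourierExp ξ x * f x) p μ :=
  hf.of_le ((continuous_fourierExp ξ).aestronglyMeasurable.mul hf.1)
    (ae_of_all _ fun x => by simp)

end FourierExp

theorem ae_eq_zero_of_fourierCoeffOn_eq_zero {a b : ℝ} (hab : a < b) {f : ℝ → ℂ}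
    (hf : MemLp f 2 (volume.restrict (Ioc a b))) (h : ∀ n, fourierCoeffOn hab f n = 0) :
    f =ᵐ[volume.restrict (Ioc a b)] 0 := by
  have hparseval := hasSum_sq_fourierCoeffOn hab hf
  simp only [h, norm_zero, ne_eq, OfNat.ofNat_ne_zero, not_false_eq_true, zero_pow] at hparseval
  have hnorm : ∫ x in a..b, ‖f x‖ ^ 2 = 0 := by
    have := hasSum_zero.unique hparseval
    rwa [eq_comm, smul_eq_zero_iff_right (inv_ne_zero (sub_ne_zero.2 hab.ne'))] at this
  rw [intervalIntegral.integral_of_le hab.le,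
    integral_eq_zero_iff_of_nonneg (fun _ => by positivity) (hf.integrable_norm_pow two_ne_zero)]
    at hnorm
  filter_upwards [hnorm] with x hx
  simpa using hx

theorem ae_eq_zero_of_forall_setIntegral_fourierExp_mul_eq_zero {a b : ℝ} (hab : a < b)
    {f : ℝ → ℂ} (hf : MemLp f 2 (volume.restrict (Ico a b)))
    (h : ∀ n : ℤ, ∫ x in Ico a b, fourierExp (n / (b - a)) x * f x = 0) :
    f =ᵐ[volume.restrict (Ico a b)] 0 := by
  rw [Measure.restrict_congr_set Ico_ae_eq_Ioc] at hf h ⊢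
  refine ae_eq_zero_of_fourierCoeffOn_eq_zero hab hf fun n => ?_
  rw [fourierCoeffOn_eq_integral, intervalIntegral.integral_of_le hab.le]
  simp_rw [fourier_coe_eq_fourierExp, smul_eq_mul]
  rw [h, smul_zero]

variable {N r : ℕ}

theorem omegaSet_eq_union_image (N : ℕ) :
    OmegaSet N = Ico 0 (1 / 2) ∪ (· + (N : ℝ) / 2) '' Ico 0 (1 / 2) := by
  rw [image_add_const_Ico, OmegaSet, zero_add, add_comm, add_div]

theorem disjoint_Ico_image_add (hN : 1 ≤ N) :
    Disjoint (Ico (0 : ℝ) (1 / 2)) ((· + (N : ℝ) / 2) '' Ico 0 (1 / 2)) := by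
  have : (1 : ℝ) ≤ N := by exact_mod_cast hN
  rw [image_add_const_Ico, Set.disjoint_left]
  rintro x ⟨-, hx⟩ ⟨hx', -⟩
  linarith

instance isFiniteMeasure_restrict_omegaSet (N : ℕ) :
    IsFiniteMeasure (volume.restrict (OmegaSet N)) :=
  isFiniteMeasure_restrict.2
    ((Metric.isBounded_Ico _ _).union (Metric.isBounded_Ico _ _)).measure_lt_top.ne

theorem volume_omegaSet (hN : 1 ≤ N) : volume (OmegaSet N) = 1 := by
  rw [omegaSet_eq_union_image, measure_union (disjoint_Ico_image_add hN)
    ((measurableEmbedding_addRight _).measurableSet_image.2 measurableSet_Ico),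
    image_add_const_Ico, Real.volume_Ico, Real.volume_Ico, ← ENNReal.ofReal_add] <;> norm_num

theorem setIntegral_omegaSet (hN : 1 ≤ N) {f : ℝ → ℂ} (hf : IntegrableOn f (OmegaSet N)) :
    ∫ x in OmegaSet N, f x = ∫ x in Ico 0 (1 / 2), (f x + f (x + N / 2)) := by
  rw [omegaSet_eq_union_image] at hf ⊢
  exact setIntegral_union_image_add_right _ measurableSet_Ico (disjoint_Ico_image_add hN) hf

theorem setIntegral_omegaSet_fourierExp (hN : 1 ≤ N) (ξ : ℝ) :
    ∫ x in OmegaSet N, fourierExp ξ x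
      = (1 + fourierExp ξ (N / 2)) * ∫ x in Ico 0 (1 / 2), fourierExp ξ x := by
  rw [setIntegral_omegaSet hN ((memLp_fourierExp ξ).integrable one_le_two), ← integral_const_mul]
  simp_rw [fourierExp_add]
  congr with x
  ring

theorem LambdaSet.sub_eq_two_mul_or_odd (hN : N ≠ 0) (hr : Odd r) {a b : ℝ}
    (ha : a ∈ LambdaSet N r) (hb : b ∈ LambdaSet N r) :
    (∃ m : ℤ, b - a = 2 * m) ∨ ∃ k : ℤ, Odd k ∧ (b - a) * N = k := by
  have hN' : (N : ℝ) ≠ 0 := Nat.cast_ne_zero.2 hN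
  have hr' : Odd (r : ℤ) := hr.natCast
  obtain ⟨z, rfl | rfl⟩ := ha <;> obtain ⟨w, rfl | rfl⟩ := hb
  · exact .inl ⟨w - z, by push_cast; ring⟩
  · refine .inr ⟨r + 2 * ((w - z) * N), hr'.add_even (even_two_mul _), ?_⟩
    push_cast
    field_simp
    ring
  · refine .inr ⟨-r + 2 * ((w - z) * N), hr'.neg.add_even (even_two_mul _), ?_⟩
    push_cast
    field_simp
    ring
  · exact .inl ⟨w - z, by push_cast; ring⟩

theorem setIntegral_omegaSet_fourierExp_sub (hN : 1 ≤ N) (hr : Odd r) {a b : ℝ}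
    (ha : a ∈ LambdaSet N r) (hb : b ∈ LambdaSet N r) :
    ∫ x in OmegaSet N, fourierExp (b - a) x = if a = b then 1 else 0 := by
  split_ifs with hab
  · simp [hab, fourierExp_zero, measureReal_def, volume_omegaSet hN]
  rw [setIntegral_omegaSet_fourierExp hN]
  rcases LambdaSet.sub_eq_two_mul_or_odd (by omega) hr ha hb with ⟨m, hm⟩ | ⟨k, hk, hkN⟩
  · have hne : b - a ≠ 0 := sub_ne_zero.2 (Ne.symm hab)
    rw [setIntegral_Ico_fourierExp_eq_zero (by norm_num) hne (k := m) (by rw [hm]; ring),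
      mul_zero]
  · rw [fourierExp_eq_neg_one_of_odd hk (by rw [← hkN]; ring), add_neg_cancel, zero_mul]

theorem ae_eq_zero_of_forall_setIntegral_omegaSet_fourierExp_mul_eq_zero (hN : 1 ≤ N)
    (hr : Odd r) {u : ℝ → ℂ} (hu : MemLp u 2 (volume.restrict (OmegaSet N)))
    (h : ∀ ξ ∈ LambdaSet N r, ∫ x in OmegaSet N, fourierExp (-ξ) x * u x = 0) :
    u =ᵐ[volume.restrict (OmegaSet N)] 0 := by
  set c : ℝ := N / 2
  have hN' : (N : ℝ) ≠ 0 := Nat.cast_ne_zero.2 (by omega)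
  have hsplit : ∀ ξ ∈ LambdaSet N r,
      ∫ x in Ico 0 (1 / 2), fourierExp (-ξ) x * (u x + fourierExp (-ξ) c * u (x + c)) = 0 := by
    intro ξ hξ
    rw [← h ξ hξ, setIntegral_omegaSet hN ((hu.fourierExp_mul (-ξ)).integrable one_le_two)]
    simp_rw [fourierExp_add]
    congr with x
    ring
  rw [omegaSet_eq_union_image] at hu ⊢
  have hu₁ : MemLp u 2 (volume.restrict (Ico 0 (1 / 2))) :=
    hu.mono_measure (Measure.restrict_mono subset_union_left le_rfl)
  have hu₂ : MemLp (fun x => u (x + c)) 2 (volume.restrict (Ico 0 (1 / 2))) :=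
    (hu.mono_measure (Measure.restrict_mono subset_union_right le_rfl)).comp_measurePreserving
      (measurePreserving_add_right_restrict_image c _)
  have hplus : (fun x => u x + u (x + c)) =ᵐ[volume.restrict (Ico 0 (1 / 2))] 0 := by
    refine ae_eq_zero_of_forall_setIntegral_fourierExp_mul_eq_zero (by norm_num) (hu₁.add hu₂)
      fun n => ?_
    have := hsplit (2 * (-n : ℤ)) ⟨-n, .inl rfl⟩
    rw [fourierExp_eq_one_of_mul_eq_int (k := n * N) (by push_cast; ring)] at this
    rw [← this]
    congr with x
    rw [one_mul]
    congr 2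
    push_cast
    ring
  have hminus : (fun x => fourierExp (-(r / N)) x * (u x - u (x + c)))
      =ᵐ[volume.restrict (Ico 0 (1 / 2))] 0 := by
    refine ae_eq_zero_of_forall_setIntegral_fourierExp_mul_eq_zero (by norm_num)
      ((hu₁.sub hu₂).fourierExp_mul _) fun n => ?_
    have := hsplit (r / N + 2 * (-n : ℤ)) ⟨-n, .inr rfl⟩
    rw [fourierExp_eq_neg_one_of_odd (k := -(r + 2 * (-n * N)))
      (hr.natCast.add_even (even_two_mul _)).neg (by push_cast; field_simp; ring)] at this
    rw [← this]
    congr with x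
    rw [← mul_assoc, fourierExp_mul_fourierExp]
    congr 2
    · push_cast
      ring
    · ring
  have hzero : ∀ᵐ x ∂volume.restrict (Ico 0 (1 / 2)), u x = 0 ∧ u (x + c) = 0 := by
    filter_upwards [hplus, hminus] with x hsum hdiff
    have hdiff' := (mul_eq_zero.1 hdiff).resolve_left (fourierExp_ne_zero _ _)
    simp only [Pi.zero_apply] at hsum
    exact ⟨by linear_combination (hsum + hdiff') / 2, by linear_combination (hsum - hdiff') / 2⟩
  exact (ae_restrict_union_image_add_right_iff c).2
    ⟨hzero.mono fun x hx => hx.1, hzero.mono fun x hx => hx.2⟩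

theorem inner_toLp_fourierExp {μ : Measure ℝ} [IsFiniteMeasure μ] (ξ : ℝ) (g : Lp ℂ 2 μ) :
    inner ℂ ((memLp_fourierExp ξ).toLp (fourierExp ξ)) g
      = ∫ x, fourierExp (-ξ) x * g x ∂μ := by
  rw [L2.inner_def]
  refine integral_congr_ae ?_
  filter_upwards [(memLp_fourierExp (μ := μ) ξ).coeFn_toLp] with x hx
  rw [RCLike.inner_apply', hx, conj_fourierExp]

theorem inner_toLp_fourierExp_toLp_fourierExp {μ : Measure ℝ} [IsFiniteMeasure μ]
    (ξ η : ℝ) :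
    inner ℂ ((memLp_fourierExp (μ := μ) (p := 2) ξ).toLp (fourierExp ξ))
      ((memLp_fourierExp (μ := μ) (p := 2) η).toLp (fourierExp η))
      = ∫ x, fourierExp (η - ξ) x ∂μ := by
  rw [inner_toLp_fourierExp]
  refine integral_congr_ae ?_
  filter_upwards [(memLp_fourierExp (μ := μ) η).coeFn_toLp] with x hx
  rw [hx, fourierExp_mul_fourierExp, neg_add_eq_sub]

theorem spectral_pair_general
    (N r : ℕ) (hN : 1 ≤ N) (hr_odd : Odd r) :
    ∃ e : LambdaSet N r → Lp ℂ 2 (volume.restrict (OmegaSet N)),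
      (∀ lam : LambdaSet N r,
        (e lam : ℝ → ℂ) =ᵐ[volume.restrict (OmegaSet N)]
          fun x => Complex.exp (((2 * π * (lam : ℝ) * x : ℝ) : ℂ) * Complex.I)) ∧
      Orthonormal ℂ e ∧
      (Submodule.span ℂ (Set.range e)).topologicalClosure = ⊤ := by
  refine ⟨fun lam => (memLp_fourierExp lam).toLp (fourierExp lam),
    fun lam => (memLp_fourierExp lam).coeFn_toLp, ?_, ?_⟩
  · rw [orthonormal_iff_ite]
    intro a b
    rw [inner_toLp_fourierExp_toLp_fourierExp,
      setIntegral_omegaSet_fourierExp_sub hN hr_odd a.2 b.2]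
    simp only [Subtype.ext_iff]
  · rw [Submodule.topologicalClosure_eq_top_iff, Submodule.eq_bot_iff]
    intro u hu
    refine Lp.eq_zero_iff_ae_eq_zero.2
      (ae_eq_zero_of_forall_setIntegral_omegaSet_fourierExp_mul_eq_zero hN hr_odd (Lp.memLp u)
        fun ξ hξ => ?_)
    rw [← inner_toLp_fourierExp]
    exact (Submodule.mem_orthogonal _ u).1 hu _ (Submodule.subset_span ⟨⟨ξ, hξ⟩, rfl⟩)

/-- Example 1.2 / exp12: `(Ω, Λ)` is a spectral pair, i.e. the family
`{e^{2πiλ·} χ_Ω}_{λ∈Λ}` is a complete orthonormal system (orthonormal basis) of `L²(Ω)`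
(here realized as `Lp ℂ 2` of Lebesgue measure restricted to `Ω`; note `|Ω| = 1`). -/
theorem spectral_pair
    (N r : ℕ) (hN : 1 ≤ N) (hr_odd : Odd r) (hr_cop : Nat.Coprime r N)
    (hr1 : 1 ≤ r) (hr2 : r ≤ 2 * N - 1) :
    ∃ e : LambdaSet N r → Lp ℂ 2 (volume.restrict (OmegaSet N)),
      (∀ lam : LambdaSet N r,
        (e lam : ℝ → ℂ) =ᵐ[volume.restrict (OmegaSet N)]
          fun x => Complex.exp (((2 * π * (lam : ℝ) * x : ℝ) : ℂ) * Complex.I)) ∧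
      Orthonormal ℂ e ∧
      (Submodule.span ℂ (Set.range e)).topologicalClosure = ⊤ :=
  spectral_pair_general N r hN hr_odd
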